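/- Set L = exp(2 · var φ + M · ‖φ‖). For every natural number n, every n-cylinder [v] and every (n+1)-cylinder [w] with [w] ⊆ [v] satisfy μ([w]) ≥ L^{−1} · exp(−‖φ‖) · μ([v]). -/

import Mathlib

open MeasureTheory Real
open scoped ENNReal

variable {r : ℕ}

/-- The one-sided subshift of finite type determined by the transition
matrix `A`. -/
abbrev OneSided (A : Fin r → Fin r → Prop) : Type :=
  {x : ℕ → Fin r // ∀ i, A (x i) (x (i + 1))}

/-- The shift map `σ` on the one-sided subshift. -/
def shift1 {A : Fin r → Fin r → Prop} (x : OneSided A) : OneSided A :=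
  ⟨fun i => x.1 (i + 1), fun i => x.2 (i + 1)⟩

/-- The metric `d(x,y) = ∑_{i ∈ ℕ, x i ≠ y i} 2^{-i}` on the one-sided
subshift. -/
noncomputable def dist1 {A : Fin r → Fin r → Prop} (x y : OneSided A) : ℝ :=
  ∑' i : ℕ, if x.1 i ≠ y.1 i then ((2 : ℝ)⁻¹) ^ i else 0

/-- `ψ` is Hölder with respect to the distance function `d`. -/
def IsHolderWrt {X : Type*} (d : X → X → ℝ) (ψ : X → ℝ) : Prop :=
  ∃ C > 0, ∃ α ∈ Set.Ioc (0 : ℝ) 1, ∀ x y, |ψ x - ψ y| ≤ C * d x y ^ α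

/-- A word `w : Fin n → Fin r` is admissible if `A (w i) (w (i+1))` for all
`i < n − 1`. -/
def AdmissibleWord {n : ℕ} (A : Fin r → Fin r → Prop) (w : Fin n → Fin r) : Prop :=
  ∀ i : ℕ, ∀ h : i + 1 < n, A (w ⟨i, Nat.lt_of_succ_lt h⟩) (w ⟨i + 1, h⟩)

/-- The `n`-cylinder `[w]` of a word `w : Fin n → Fin r`. -/
def Cyl (A : Fin r → Fin r → Prop) {n : ℕ} (w : Fin n → Fin r) : Set (OneSided A) :=
  {x | ∀ i : Fin n, x.1 i = w i}

/-- `(P, μ)` is a conformal pair for `φ`: `μ` is a Borel probability measure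
with `μ(σ '' E) = ∫_E exp(P − φ) dμ` for every Borel `E` contained in a
1-cylinder.  This encodes `log(dμ(σx)/dμ(x)) = −φ(x) + P`. -/
def ConformalPair (A : Fin r → Fin r → Prop) (φ : OneSided A → ℝ) (P : ℝ)
    (μ : Measure (OneSided A)) : Prop :=
  IsProbabilityMeasure μ ∧
    ∀ (j : Fin r) (E : Set (OneSided A)), MeasurableSet E → (∀ x ∈ E, x.1 0 = j) →
      μ (shift1 '' E) = ∫⁻ x in E, ENNReal.ofReal (Real.exp (P - φ x)) ∂μ

/-- `Σ_A⁺` is transitive: some point has dense forward orbit under `σ`. -/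
def Transitive1 (A : Fin r → Fin r → Prop) : Prop :=
  ∃ x : OneSided A, Dense (Set.range fun n : ℕ => shift1^[n] x)

/-- `Σ_A⁺` is mixing with constant `M`: for all symbols `i`, `j` there is an
admissible word of length `M+1` beginning with `i` and ending with `j`. -/
def MixingWith (A : Fin r → Fin r → Prop) (M : ℕ) : Prop :=
  1 ≤ M ∧ ∀ i j : Fin r, ∃ w : Fin (M + 1) → Fin r,
    AdmissibleWord A w ∧ w 0 = i ∧ w (Fin.last M) = j


/-- `‖φ‖ = sup_x |φ(x)|`. -/
noncomputable def supNorm (A : Fin r → Fin r → Prop) (φ : OneSided A → ℝ) : ℝ :=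
  ⨆ x : OneSided A, |φ x|

/-- `var_k φ = sup {|φ(x) − φ(y)| : x i = y i for all i < k}`. -/
noncomputable def varK (A : Fin r → Fin r → Prop) (φ : OneSided A → ℝ) (k : ℕ) : ℝ :=
  sSup {v : ℝ | ∃ x y : OneSided A, (∀ i : ℕ, i < k → x.1 i = y.1 i) ∧ v = |φ x - φ y|}

/-- `var φ = ∑_{k=0}^∞ var_k φ`. -/
noncomputable def varSum (A : Fin r → Fin r → Prop) (φ : OneSided A → ℝ) : ℝ :=
  ∑' k : ℕ, varK A φ k

/-!
Conformality says `μ (σ E) = ∫_E exp (P - φ) dμ` on each 1-cylinder. If the word `w` extends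
`v` by one symbol, compare this identity for `[w]` and `[v]`: since `φ` varies by at most
`var_n φ` on `[v]`, `μ[w] / μ[v] ≥ exp (-2 var_n φ) · μ[σw] / μ[σv]`. Iterating down to the
empty word gives `μ[w] ≥ exp (-2 var φ) · μ[v] · μ[w_n]`, where `w_n` is the last symbol of `w`.
Finally every 1-cylinder has measure at least `exp (-M‖φ‖)`: by mixing, each `[j]` is the image
under `σ^M` of a subcylinder of `[i]`, each application of `σ` multiplies measure by at most
`exp ‖φ‖`, and summing over `j` gives `1 ≤ exp (M‖φ‖) μ[i]`.
-/

open Finset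

lemma ENNReal.ofReal_exp_add (a b : ℝ) :
    ENNReal.ofReal (exp (a + b)) = ENNReal.ofReal (exp a) * ENNReal.ofReal (exp b) := by
  rw [exp_add, ENNReal.ofReal_mul (exp_nonneg a)]

lemma ENNReal.ofReal_exp_neg_mul_cancel (a : ℝ) (x : ℝ≥0∞) :
    ENNReal.ofReal (exp (-a)) * (ENNReal.ofReal (exp a) * x) = x := by
  rw [← mul_assoc, ← ENNReal.ofReal_exp_add, neg_add_cancel, exp_zero, ENNReal.ofReal_one,
    one_mul]

section Subshift

variable {A : Fin r → Fin r → Prop}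

lemma summable_ite_inv_two_pow (p : ℕ → Prop) [DecidablePred p] :
    Summable fun i => if p i then (2 : ℝ)⁻¹ ^ i else 0 :=
  summable_geometric_two.of_nonneg_of_le (fun i => by positivity)
    (fun i => by split_ifs <;> simp)

lemma dist1_nonneg (x y : OneSided A) : 0 ≤ dist1 x y :=
  tsum_nonneg fun i => by positivity

lemma dist1_le_of_forall_lt_eq {x y : OneSided A} {k : ℕ} (h : ∀ i < k, x.1 i = y.1 i) :
    dist1 x y ≤ 2 * 2⁻¹ ^ k := by
  rw [← tsum_geometric_inv_two_ge k]
  refine (summable_ite_inv_two_pow _).tsum_le_tsum (fun i => ?_) (summable_ite_inv_two_pow _)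
  by_cases hki : k ≤ i
  · split_ifs <;> simp
  · simp [h i (not_le.mp hki), hki]

section Holder

variable {φ : OneSided A → ℝ}

lemma IsHolderWrt.exists_abs_sub_le_geometric (hφ : IsHolderWrt dist1 φ) :
    ∃ K q : ℝ, 0 ≤ K ∧ 0 ≤ q ∧ q < 1 ∧
      ∀ k (x y : OneSided A), (∀ i < k, x.1 i = y.1 i) → |φ x - φ y| ≤ K * q ^ k := by
  obtain ⟨C, hC, α, ⟨hα, -⟩, hH⟩ := hφ
  refine ⟨C * 2 ^ α, 2⁻¹ ^ α, by positivity, by positivity,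
    rpow_lt_one (by norm_num) (by norm_num) hα, fun k x y h => ?_⟩
  calc |φ x - φ y| ≤ C * dist1 x y ^ α := hH x y
    _ ≤ C * (2 * 2⁻¹ ^ k) ^ α := by
      gcongr
      exacts [dist1_nonneg x y, dist1_le_of_forall_lt_eq h]
    _ = C * 2 ^ α * (2⁻¹ ^ α) ^ k := by
      rw [mul_rpow (by norm_num) (by positivity), ← rpow_natCast, ← rpow_natCast,
        ← rpow_mul (by norm_num), ← rpow_mul (by norm_num), mul_comm (k : ℝ), mul_assoc]

lemma IsHolderWrt.abs_sub_le_varK (hφ : IsHolderWrt dist1 φ) {k : ℕ} {x y : OneSided A}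
    (h : ∀ i < k, x.1 i = y.1 i) : |φ x - φ y| ≤ varK A φ k := by
  obtain ⟨K, q, -, -, -, hK⟩ := hφ.exists_abs_sub_le_geometric
  refine le_csSup ⟨K * q ^ k, ?_⟩ ⟨x, y, h, rfl⟩
  rintro _ ⟨x, y, hxy, rfl⟩
  exact hK k x y hxy

lemma varK_nonneg (φ : OneSided A → ℝ) (k : ℕ) : 0 ≤ varK A φ k :=
  Real.sSup_nonneg <| by rintro _ ⟨x, y, -, rfl⟩; exact abs_nonneg _

lemma IsHolderWrt.summable_varK (hφ : IsHolderWrt dist1 φ) : Summable (varK A φ) := by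
  obtain ⟨K, q, hK, hq0, hq1, hKq⟩ := hφ.exists_abs_sub_le_geometric
  refine ((summable_geometric_of_lt_one hq0 hq1).mul_left K).of_nonneg_of_le (varK_nonneg φ)
    fun k => Real.sSup_le ?_ (by positivity)
  rintro _ ⟨x, y, hxy, rfl⟩
  exact hKq k x y hxy

lemma IsHolderWrt.sum_varK_le_varSum (hφ : IsHolderWrt dist1 φ) (s : Finset ℕ) :
    ∑ k ∈ s, varK A φ k ≤ varSum A φ :=
  hφ.summable_varK.sum_le_tsum s fun k _ => varK_nonneg φ k

lemma IsHolderWrt.bddAbove_range_abs (hφ : IsHolderWrt dist1 φ) :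
    BddAbove (Set.range fun x => |φ x|) := by
  obtain ⟨K, q, -, -, -, hK⟩ := hφ.exists_abs_sub_le_geometric
  rcases isEmpty_or_nonempty (OneSided A) with _ | ⟨⟨x₀⟩⟩
  · simp [Set.range_eq_empty]
  refine ⟨K + |φ x₀|, ?_⟩
  rintro _ ⟨x, rfl⟩
  have hx := hK 0 x x₀ (by simp)
  rw [pow_zero, mul_one] at hx
  linarith [abs_sub_abs_le_abs_sub (φ x) (φ x₀)]

lemma IsHolderWrt.abs_le_supNorm (hφ : IsHolderWrt dist1 φ) (x : OneSided A) :
    |φ x| ≤ supNorm A φ :=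
  le_ciSup hφ.bddAbove_range_abs x

lemma supNorm_nonneg (φ : OneSided A → ℝ) : 0 ≤ supNorm A φ :=
  Real.iSup_nonneg fun _ => abs_nonneg _

end Holder

section Cylinders

variable {n : ℕ}

lemma measurableSet_cyl (u : Fin n → Fin r) : MeasurableSet (Cyl A u) := by
  have h : Cyl A u = ⋂ i : Fin n, (fun x : OneSided A => x.1 i) ⁻¹' {u i} := by
    ext x
    simp [Cyl]
  rw [h]
  exact .iInter fun i =>
    ((measurable_pi_apply _).comp measurable_subtype_coe) (measurableSet_singleton _)

lemma cyl_fin_zero (u : Fin 0 → Fin r) : Cyl A u = Set.univ :=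
  Set.eq_univ_of_forall fun _ i => i.elim0

lemma cyl_fin_one (u : Fin 1 → Fin r) : Cyl A u = {x | x.1 0 = u 0} := by
  ext x
  exact ⟨fun hx => hx 0, fun hx i => by rwa [Subsingleton.elim i 0]⟩

lemma cyl_subset_setOf_zero (u : Fin (n + 1) → Fin r) : Cyl A u ⊆ {x | x.1 0 = u 0} :=
  fun _ hx => hx 0

lemma cyl_subset_cyl_init (u : Fin (n + 1) → Fin r) : Cyl A u ⊆ Cyl A (Fin.init u) :=
  fun _ hx i => hx i.castSucc

lemma eq_init_of_cyl_subset {v : Fin n → Fin r} {w : Fin (n + 1) → Fin r}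
    (hne : (Cyl A w).Nonempty) (hsub : Cyl A w ⊆ Cyl A v) : v = Fin.init w := by
  obtain ⟨z, hz⟩ := hne
  funext i
  exact (hsub hz i).symm.trans (hz i.castSucc)

lemma AdmissibleWord.tail {u : Fin (n + 1) → Fin r} (hu : AdmissibleWord A u) :
    AdmissibleWord A (Fin.tail u) :=
  fun i h => hu (i + 1) (by omega)

lemma image_shift1_cyl_subset (u : Fin (n + 1) → Fin r) :
    shift1 '' Cyl A u ⊆ Cyl A (Fin.tail u) := by
  rintro _ ⟨x, hx, rfl⟩ i
  exact hx i.succ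

lemma image_shift1_cyl {u : Fin (n + 2) → Fin r} (hu : AdmissibleWord A u) :
    shift1 '' Cyl A u = Cyl A (Fin.tail u) := by
  refine (image_shift1_cyl_subset u).antisymm fun y hy => ?_
  have hstep : A (u 0) (y.1 0) := by
    rw [show y.1 0 = u 1 from hy 0]
    exact hu 0 (by omega)
  refine ⟨⟨fun j => Nat.casesOn j (u 0) y.1, fun j => ?_⟩, fun i => ?_, rfl⟩
  · cases j with
    | zero => exact hstep
    | succ j => exact y.2 j
  · cases i using Fin.cases with
    | zero => rfl
    | succ i => exact hy i

end Cylinders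

namespace ConformalPair

variable {φ : OneSided A → ℝ} {P : ℝ} {μ : Measure (OneSided A)} {E : Set (OneSided A)}
  {j : Fin r} {c : ℝ}

lemma measure_image_shift1_le (h : ConformalPair A φ P μ) (hE : MeasurableSet E)
    (hj : ∀ x ∈ E, x.1 0 = j) (hc : ∀ x ∈ E, P - φ x ≤ c) :
    μ (shift1 '' E) ≤ ENNReal.ofReal (exp c) * μ E := by
  rw [h.2 j E hE hj, ← setLIntegral_const]
  exact setLIntegral_mono' hE fun x hx => ENNReal.ofReal_le_ofReal (exp_le_exp.mpr (hc x hx))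

lemma le_measure_image_shift1 (h : ConformalPair A φ P μ) (hE : MeasurableSet E)
    (hj : ∀ x ∈ E, x.1 0 = j) (hc : ∀ x ∈ E, c ≤ P - φ x) :
    ENNReal.ofReal (exp c) * μ E ≤ μ (shift1 '' E) := by
  rw [h.2 j E hE hj, ← setLIntegral_const]
  exact setLIntegral_mono' hE fun x hx => ENNReal.ofReal_le_ofReal (exp_le_exp.mpr (hc x hx))

lemma measure_cyl_tail_le {n : ℕ} (h : ConformalPair A φ P μ) {u : Fin (n + 2) → Fin r}
    (hu : AdmissibleWord A u) (hc : ∀ x ∈ Cyl A u, P - φ x ≤ c) :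
    μ (Cyl A (Fin.tail u)) ≤ ENNReal.ofReal (exp c) * μ (Cyl A u) := by
  rw [← image_shift1_cyl hu]
  exact h.measure_image_shift1_le (measurableSet_cyl u) (cyl_subset_setOf_zero u) hc

lemma le_measure_cyl_tail {n : ℕ} (h : ConformalPair A φ P μ) {u : Fin (n + 1) → Fin r}
    (hc : ∀ x ∈ Cyl A u, c ≤ P - φ x) :
    ENNReal.ofReal (exp c) * μ (Cyl A u) ≤ μ (Cyl A (Fin.tail u)) :=
  (h.le_measure_image_shift1 (measurableSet_cyl u) (cyl_subset_setOf_zero u) hc).trans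
    (measure_mono (image_shift1_cyl_subset u))

lemma measure_setOf_last_le (h : ConformalPair A φ P μ) {N : ℝ}
    (hN : ∀ x, P - φ x ≤ N) :
    ∀ {m : ℕ} (u : Fin (m + 1) → Fin r), AdmissibleWord A u →
      μ {x | x.1 0 = u (Fin.last m)} ≤ ENNReal.ofReal (exp (m * N)) * μ (Cyl A u)
  | 0, u, _ => by simp [cyl_fin_one]
  | m + 1, u, hu => calc
      μ {x | x.1 0 = u (Fin.last (m + 1))} = μ {x | x.1 0 = Fin.tail u (Fin.last m)} := rfl
      _ ≤ ENNReal.ofReal (exp (m * N)) * μ (Cyl A (Fin.tail u)) :=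
        h.measure_setOf_last_le hN (Fin.tail u) hu.tail
      _ ≤ ENNReal.ofReal (exp (m * N)) * (ENNReal.ofReal (exp N) * μ (Cyl A u)) := by
        gcongr
        exact h.measure_cyl_tail_le hu fun x _ => hN x
      _ = ENNReal.ofReal (exp ((m + 1 : ℕ) * N)) * μ (Cyl A u) := by
        rw [← mul_assoc, ← ENNReal.ofReal_exp_add]
        push_cast
        ring_nf

lemma ofReal_exp_neg_mul_le_measure_setOf {M : ℕ} (hmix : MixingWith A M)
    (h : ConformalPair A φ P μ) {N : ℝ} (hN : ∀ x, P - φ x ≤ N) (b : Fin r) :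
    ENNReal.ofReal (exp (-(M * N))) ≤ μ {x | x.1 0 = b} := by
  have := h.1
  choose u hadm hfirst hlast using hmix.2 b
  have hdisj : Pairwise (Function.onFun Disjoint fun c => Cyl A (u c)) := fun c c' hcc =>
    Set.disjoint_left.mpr fun x hx hx' =>
      hcc (((hx (Fin.last M)).trans (hlast c)).symm.trans ((hx' (Fin.last M)).trans (hlast c')))
  have hone : 1 ≤ ENNReal.ofReal (exp (M * N)) * μ {x | x.1 0 = b} := calc
    (1 : ℝ≥0∞) = μ (⋃ c, {x | x.1 0 = c}) := by
      rw [Set.iUnion_eq_univ_iff.mpr fun x => ⟨x.1 0, rfl⟩, measure_univ]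
    _ ≤ ∑' c, μ {x | x.1 0 = c} := measure_iUnion_le _
    _ ≤ ∑' c, ENNReal.ofReal (exp (M * N)) * μ (Cyl A (u c)) := by
      refine ENNReal.tsum_le_tsum fun c => ?_
      simpa only [hlast c] using h.measure_setOf_last_le hN (u c) (hadm c)
    _ = ENNReal.ofReal (exp (M * N)) * μ (⋃ c, Cyl A (u c)) := by
      rw [ENNReal.tsum_mul_left, measure_iUnion hdisj fun c => measurableSet_cyl _]
    _ ≤ ENNReal.ofReal (exp (M * N)) * μ {x | x.1 0 = b} := by
      gcongr
      exact Set.iUnion_subset fun c => (hfirst c) ▸ cyl_subset_setOf_zero (u c)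
  calc ENNReal.ofReal (exp (-(M * N))) ≤
        ENNReal.ofReal (exp (-(M * N))) * (ENNReal.ofReal (exp (M * N)) * μ {x | x.1 0 = b}) :=
      le_mul_of_one_le_right' hone
    _ = μ {x | x.1 0 = b} := ENNReal.ofReal_exp_neg_mul_cancel _ _

lemma measure_cyl_ge_measure_cyl_init (h : ConformalPair A φ P μ) (hφ : IsHolderWrt dist1 φ) :
    ∀ {n : ℕ} (w : Fin (n + 1) → Fin r), AdmissibleWord A w →
      ENNReal.ofReal (exp (-(2 * ∑ k ∈ Icc 1 n, varK A φ k))) * μ (Cyl A (Fin.init w)) *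
        μ {x | x.1 0 = w (Fin.last n)} ≤ μ (Cyl A w)
  | 0, w, _ => by
    have := h.1
    simp [cyl_fin_zero, cyl_fin_one]
  | n + 1, w, hw => by
    set v := Fin.init w
    rcases (Cyl A v).eq_empty_or_nonempty with hv | ⟨z, hz⟩
    · simp [hv]
    have hnear : ∀ x ∈ Cyl A v, |φ x - φ z| ≤ varK A φ (n + 1) := fun x hx =>
      hφ.abs_sub_le_varK fun i hi => (hx ⟨i, hi⟩).trans (hz ⟨i, hi⟩).symm
    set S := ∑ k ∈ Icc 1 n, varK A φ k
    set a := P - φ z + varK A φ (n + 1)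
    set b := P - φ z - varK A φ (n + 1)
    set m := μ {x | x.1 0 = Fin.tail w (Fin.last n)}
    have hupper : μ (Cyl A (Fin.tail w)) ≤ ENNReal.ofReal (exp a) * μ (Cyl A w) :=
      h.measure_cyl_tail_le hw fun x hx => by
        linarith [neg_abs_le (φ x - φ z), hnear x (cyl_subset_cyl_init w hx)]
    have hlower : ENNReal.ofReal (exp b) * μ (Cyl A v) ≤ μ (Cyl A (Fin.init (Fin.tail w))) := by
      rw [← Fin.tail_init_eq_init_tail]
      exact h.le_measure_cyl_tail fun x hx => by
        linarith [le_abs_self (φ x - φ z), hnear x hx]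
    have hsum : -(2 * ∑ k ∈ Icc 1 (n + 1), varK A φ k) = -(2 * S) + -a + b := by
      rw [sum_Icc_succ_top (by omega)]
      ring
    calc ENNReal.ofReal (exp (-(2 * ∑ k ∈ Icc 1 (n + 1), varK A φ k))) * μ (Cyl A v) * m
        = ENNReal.ofReal (exp (-a)) *
            (ENNReal.ofReal (exp (-(2 * S))) * (ENNReal.ofReal (exp b) * μ (Cyl A v)) * m) := by
          rw [hsum, ENNReal.ofReal_exp_add, ENNReal.ofReal_exp_add]
          ring
      _ ≤ ENNReal.ofReal (exp (-a)) *
            (ENNReal.ofReal (exp (-(2 * S))) * μ (Cyl A (Fin.init (Fin.tail w))) * m) := by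
          gcongr
      _ ≤ ENNReal.ofReal (exp (-a)) * μ (Cyl A (Fin.tail w)) := by
          gcongr
          exact h.measure_cyl_ge_measure_cyl_init hφ (Fin.tail w) hw.tail
      _ ≤ ENNReal.ofReal (exp (-a)) * (ENNReal.ofReal (exp a) * μ (Cyl A w)) := by gcongr
      _ = μ (Cyl A w) := ENNReal.ofReal_exp_neg_mul_cancel a _

end ConformalPair

end Subshift

theorem gibbs_cylinder_bounded_ratio_general
    {A : Fin r → Fin r → Prop} (M : ℕ) (hmix : MixingWith A M)
    (hcylne : ∀ (n : ℕ) (w : Fin n → Fin r), AdmissibleWord A w → (Cyl A w).Nonempty)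
    (φ : OneSided A → ℝ) (hφ : IsHolderWrt dist1 φ)
    (μ : Measure (OneSided A)) (hpair : ConformalPair A φ 0 μ)
    (n : ℕ) (v : Fin n → Fin r) (w : Fin (n + 1) → Fin r)
    (hw : AdmissibleWord A w)
    (hsub : Cyl A w ⊆ Cyl A v) :
    ENNReal.ofReal ((Real.exp (2 * varSum A φ + M * supNorm A φ))⁻¹ *
        Real.exp (-(supNorm A φ))) * μ (Cyl A v) ≤ μ (Cyl A w) := by
  obtain rfl := eq_init_of_cyl_subset (hcylne (n + 1) w hw) hsub
  set S := ∑ k ∈ Icc 1 n, varK A φ k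
  have hN : ∀ x, 0 - φ x ≤ supNorm A φ := fun x => by
    linarith [neg_abs_le (φ x), hφ.abs_le_supNorm x]
  have hconst : (exp (2 * varSum A φ + M * supNorm A φ))⁻¹ * exp (-supNorm A φ) ≤
      exp (-(2 * S)) * exp (-(M * supNorm A φ)) := by
    rw [← exp_neg, ← exp_add, ← exp_add, exp_le_exp]
    linarith [hφ.sum_varK_le_varSum (Icc 1 n), supNorm_nonneg φ]
  calc _ ≤ ENNReal.ofReal (exp (-(2 * S)) * exp (-(M * supNorm A φ))) *
          μ (Cyl A (Fin.init w)) := by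
        gcongr
    _ = ENNReal.ofReal (exp (-(2 * S))) * μ (Cyl A (Fin.init w)) *
          ENNReal.ofReal (exp (-(M * supNorm A φ))) := by
        rw [ENNReal.ofReal_mul (exp_nonneg _)]
        ring
    _ ≤ ENNReal.ofReal (exp (-(2 * S))) * μ (Cyl A (Fin.init w)) *
          μ {x | x.1 0 = w (Fin.last n)} := by
        gcongr
        exact hpair.ofReal_exp_neg_mul_le_measure_setOf hmix hN _
    _ ≤ μ (Cyl A w) := hpair.measure_cyl_ge_measure_cyl_init hφ w hw

/-- (Bounded ratio geometry for `μ`) With `L = exp(2·var φ + M·‖φ‖)`, for the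
conformal measure `μ` of a Hölder `φ` with constant `P = 0`, any
`(n+1)`-cylinder `[w]` contained in an `n`-cylinder `[v]` satisfies
`μ([w]) ≥ L⁻¹ · exp(−‖φ‖) · μ([v])`. -/
theorem gibbs_cylinder_bounded_ratio
    {A : Fin r → Fin r → Prop} (M : ℕ) (hmix : MixingWith A M)
    (hcylne : ∀ (n : ℕ) (w : Fin n → Fin r), AdmissibleWord A w → (Cyl A w).Nonempty)
    (φ : OneSided A → ℝ) (hφ : IsHolderWrt dist1 φ)
    (μ : Measure (OneSided A)) (hpair : ConformalPair A φ 0 μ)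
    (n : ℕ) (v : Fin n → Fin r) (w : Fin (n + 1) → Fin r)
    (hv : AdmissibleWord A v) (hw : AdmissibleWord A w)
    (hsub : Cyl A w ⊆ Cyl A v) :
    ENNReal.ofReal ((Real.exp (2 * varSum A φ + M * supNorm A φ))⁻¹ *
        Real.exp (-(supNorm A φ))) * μ (Cyl A v) ≤ μ (Cyl A w) :=
  gibbs_cylinder_bounded_ratio_general M hmix hcylne φ hφ μ hpair n v w hw hsub
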